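/- For every n ≥ 1, the n-qubit W state admits a basis under local unitaries: there exist 2^n strings V_j = U₁^{(j)} ⊗ ⋯ ⊗ Uₙ^{(j)} (j = 1, …, 2^n) of 2×2 complex unitary matrices such that the vectors V_j W_n form an orthonormal basis of ℂ^{2^n}, where W_n ∈ (ℂ²)^{⊗n} is the W state. -/

import Mathlib

open Matrix

/-- A family of vectors in `ℂ^κ` forms an orthonormal basis: the vectors are
pairwise orthogonal unit vectors and they span the whole space. -/
def IsONBasis {ι κ : Type*} [Fintype ι] [DecidableEq ι] [Fintype κ] (v : ι → κ → ℂ) : Prop :=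
  (∀ j j', star (v j) ⬝ᵥ v j' = if j = j' then 1 else 0) ∧
    Submodule.span ℂ (Set.range v) = ⊤

/-- The `n`-fold Kronecker product `U 0 ⊗ ⋯ ⊗ U (n-1)` of `2×2` matrices, acting on
`(ℂ²)^{⊗n} ≅ ℂ^{2^n}` indexed by `Fin n → Fin 2`. -/
def kronPow {n : ℕ} (U : Fin n → Matrix (Fin 2) (Fin 2) ℂ) :
    Matrix (Fin n → Fin 2) (Fin n → Fin 2) ℂ :=
  Matrix.of fun x y => ∏ k, U k (x k) (y k)

/-- The `n`-qubit `W` state: its coordinate at a bit string `x` equals `1/√n` if `x`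
contains exactly one `1`, and `0` otherwise. -/
noncomputable def Wstate (n : ℕ) : (Fin n → Fin 2) → ℂ :=
  fun x => if (Finset.univ.filter fun k => x k = 1).card = 1 then ((Real.sqrt n : ℂ))⁻¹ else 0

/-!
For a bit string `S`, let `U_k = X^{S_k} diag(1, ε_k)` with the Jordan–Wigner sign
`ε_k = (-1)^#{m > k | S_m = 1}`. Then `(U_1 ⊗ ⋯ ⊗ U_n) W_n = n^{-1/2} ∑_k ε_k |S + e_k⟩`, and two
such vectors for `S ≠ T` share support only when `T = S + e_p + e_q` with `p < q`. There the two
common coordinates carry sign products `ε_p(S) ε_q(T)` and `ε_q(S) ε_p(T)`, which are opposite since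
flipping bit `q` changes `ε_p` but not `ε_q`. Hence the `2^n` vectors are orthonormal, so a basis.
-/

theorem isONBasis_of_orthonormal {ι κ : Type*} [Fintype ι] [DecidableEq ι] [Fintype κ]
    (v : ι → κ → ℂ) (hv : ∀ j j', star (v j) ⬝ᵥ v j' = if j = j' then 1 else 0)
    (hcard : Fintype.card ι = Fintype.card κ) : IsONBasis v := by
  refine ⟨hv, ?_⟩
  have hli : LinearIndependent ℂ v := by
    refine Fintype.linearIndependent_iff.mpr fun g hg i => ?_
    simpa [dotProduct_sum, dotProduct_smul, hv] using congrArg (star (v i) ⬝ᵥ ·) hg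
  exact hli.span_eq_top_of_card_eq_finrank' (by simpa using hcard)

theorem star_sum_single_dotProduct_sum_single {ι κ : Type*} [Fintype ι] [Fintype κ]
    [DecidableEq κ] (x y : ι → κ) (a b : ι → ℂ) :
    star (∑ k, Pi.single (x k) (a k)) ⬝ᵥ ∑ l, Pi.single (y l) (b l) =
      ∑ k, ∑ l, if x k = y l then star (a k) * b l else 0 := by
  simp only [star_sum, dotProduct_sum, sum_dotProduct, Pi.star_single, single_dotProduct,
    Pi.single_apply, mul_ite, mul_zero]
  rw [Finset.sum_comm]

theorem sum_sum_eq_zero_of_antisymm {ι : Type*} [Fintype ι] (f : ι → ι → ℂ)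
    (hf : ∀ k l, f l k = -f k l) : ∑ k, ∑ l, f k l = 0 := by
  have h : ∑ k, ∑ l, f k l = -∑ k, ∑ l, f k l := by
    simp only [← Finset.sum_neg_distrib]
    rw [Finset.sum_comm]
    exact Finset.sum_congr rfl fun k _ => Finset.sum_congr rfl fun l _ => hf k l
  linear_combination h / 2

theorem bits_add_self {n : ℕ} (x : Fin n → Fin 2) : x + x = 0 := by
  funext i; exact (by decide : ∀ a : Fin 2, a + a = 0) (x i)

theorem bits_add_eq_add_swap {n : ℕ} {u v x y : Fin n → Fin 2} (h : u + x = v + y) :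
    v + x = u + y := by
  calc v + x = v + (u + u) + x := by rw [bits_add_self, add_zero]
    _ = v + u + (u + x) := by abel
    _ = v + u + (v + y) := by rw [h]
    _ = u + y + (v + v) := by abel
    _ = u + y := by rw [bits_add_self, add_zero]

theorem single_one_inj {n : ℕ} {k l : Fin n} :
    (Pi.single k 1 : Fin n → Fin 2) = Pi.single l 1 ↔ k = l := by
  refine ⟨fun h => ?_, fun h => h ▸ rfl⟩
  by_contra hkl
  simpa [Pi.single_apply, hkl] using congrFun h k

theorem filter_eq_one_eq_singleton_iff {n : ℕ} (x : Fin n → Fin 2) (k : Fin n) :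
    Finset.univ.filter (fun m => x m = 1) = {k} ↔ x = Pi.single k 1 := by
  simp only [Finset.ext_iff, Finset.mem_filter, Finset.mem_univ, true_and,
    Finset.mem_singleton, funext_iff]
  refine forall_congr' fun m => ?_
  by_cases hm : m = k
  · simp [hm]
  · have hbit : ∀ a : Fin 2, a = 1 ↔ a ≠ 0 := by decide
    simp [hm, hbit]

theorem Wstate_eq_smul_sum (n : ℕ) :
    Wstate n = (Real.sqrt n : ℂ)⁻¹ • ∑ k : Fin n, Pi.single (Pi.single k 1) 1 := by
  funext x
  simp only [Wstate, Pi.smul_apply, Finset.sum_apply, Pi.single_apply, smul_eq_mul,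
    Finset.sum_boole, Finset.card_eq_one, filter_eq_one_eq_singleton_iff]
  by_cases hx : ∃ k, x = Pi.single k 1
  · obtain ⟨k, rfl⟩ := hx
    simp [single_one_inj, Finset.filter_eq]
  · simp only [hx, if_false]
    rw [Finset.card_eq_zero.mpr (Finset.filter_eq_empty_iff.mpr fun k _ hk => hx ⟨k, hk⟩)]
    simp

def shiftPhase (s : Fin 2) (ε : ℂ) : Matrix (Fin 2) (Fin 2) ℂ :=
  of fun a b => (Pi.single (b + s) (ε ^ b.val) : Fin 2 → ℂ) a

theorem shiftPhase_mem_unitaryGroup (s : Fin 2) {ε : ℂ} (hε : star ε * ε = 1) :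
    shiftPhase s ε ∈ unitaryGroup (Fin 2) ℂ := by
  rw [mem_unitaryGroup_iff']
  ext i j
  fin_cases s <;> fin_cases i <;> fin_cases j <;>
    simp [shiftPhase, mul_apply, Fin.sum_univ_two] <;> exact hε

theorem kronPow_mulVec_single {n : ℕ} (U : Fin n → Matrix (Fin 2) (Fin 2) ℂ)
    (y z : Fin n → Fin 2) (c : Fin n → ℂ)
    (hU : ∀ k a, U k a (y k) = (Pi.single (z k) (c k) : Fin 2 → ℂ) a) :
    kronPow U *ᵥ Pi.single y 1 = Pi.single z (∏ k, c k) := by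
  ext x
  simp only [mulVec_single_one, col_apply, kronPow, of_apply, hU]
  by_cases hx : x = z
  · subst hx; simp
  · obtain ⟨k, hk⟩ := Function.ne_iff.mp hx
    rw [Pi.single_eq_of_ne hx, Finset.prod_eq_zero (Finset.mem_univ k) (Pi.single_eq_of_ne hk _)]

theorem kronPow_shiftPhase_mulVec_single {n : ℕ} (s : Fin n → Fin 2) (ε : Fin n → ℂ)
    (y : Fin n → Fin 2) :
    kronPow (fun k => shiftPhase (s k) (ε k)) *ᵥ Pi.single y 1 =
      Pi.single (y + s) (∏ k, ε k ^ (y k).val) :=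
  kronPow_mulVec_single _ _ _ _ fun _ _ => rfl

def bitSign (a : Fin 2) : ℂ := if a = 0 then 1 else -1

theorem bitSign_add (a b : Fin 2) : bitSign (a + b) = bitSign a * bitSign b := by
  fin_cases a <;> fin_cases b <;> simp [bitSign]

theorem star_bitSign (a : Fin 2) : star (bitSign a) = bitSign a := by
  unfold bitSign; split_ifs <;> simp

section JordanWigner

variable {n : ℕ}

def jwSign (S : Fin n → Fin 2) (k : Fin n) : ℂ := ∏ m ∈ Finset.Ioi k, bitSign (S m)

theorem jwSign_add (S T : Fin n → Fin 2) (k : Fin n) :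
    jwSign (S + T) k = jwSign S k * jwSign T k := by
  simp only [jwSign, Pi.add_apply, bitSign_add, Finset.prod_mul_distrib]

theorem jwSign_zero (k : Fin n) : jwSign 0 k = 1 := by
  simp [jwSign, bitSign]

theorem jwSign_mul_self (S : Fin n → Fin 2) (k : Fin n) : jwSign S k * jwSign S k = 1 := by
  rw [← jwSign_add, bits_add_self, jwSign_zero]

theorem star_jwSign (S : Fin n → Fin 2) (k : Fin n) : star (jwSign S k) = jwSign S k := by
  simp only [jwSign, star_prod, star_bitSign]

theorem jwSign_single (p k : Fin n) : jwSign (Pi.single p 1) k = if k < p then -1 else 1 := by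
  have hfactor (m : Fin n) :
      bitSign ((Pi.single p 1 : Fin n → Fin 2) m) = if m = p then -1 else 1 := by
    by_cases hm : m = p <;> simp [bitSign, hm]
  simp only [jwSign, hfactor, Finset.prod_ite_eq', Finset.mem_Ioi]

theorem jwSign_swap {S T : Fin n → Fin 2} {k l : Fin n}
    (h : Pi.single k 1 + S = Pi.single l 1 + T) (hST : S ≠ T) :
    jwSign S l * jwSign T k = -(jwSign S k * jwSign T l) := by
  have hkl : k ≠ l := by rintro rfl; exact hST (add_left_cancel h)
  have hT : T = S + Pi.single k 1 + Pi.single l 1 := by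
    calc T = Pi.single l 1 + Pi.single l 1 + T := by rw [bits_add_self, zero_add]
      _ = Pi.single l 1 + (Pi.single k 1 + S) := by rw [h, add_assoc]
      _ = S + Pi.single k 1 + Pi.single l 1 := by abel
  rw [hT, jwSign_add, jwSign_add, jwSign_add, jwSign_add, jwSign_single, jwSign_single,
    jwSign_single, jwSign_single]
  rcases hkl.lt_or_gt with hlt | hlt <;> simp [hlt, hlt.not_gt] <;> ring

def jwUnitary (S : Fin n → Fin 2) (k : Fin n) : Matrix (Fin 2) (Fin 2) ℂ :=
  shiftPhase (S k) (jwSign S k)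

def jwVec (S : Fin n → Fin 2) : (Fin n → Fin 2) → ℂ :=
  ∑ k, Pi.single (Pi.single k 1 + S) (jwSign S k)

theorem jwUnitary_mem_unitaryGroup (S : Fin n → Fin 2) (k : Fin n) :
    jwUnitary S k ∈ unitaryGroup (Fin 2) ℂ :=
  shiftPhase_mem_unitaryGroup _ (by rw [star_jwSign, jwSign_mul_self])

theorem kronPow_jwUnitary_mulVec_Wstate (S : Fin n → Fin 2) :
    kronPow (jwUnitary S) *ᵥ Wstate n = (Real.sqrt n : ℂ)⁻¹ • jwVec S := by
  rw [Wstate_eq_smul_sum, mulVec_smul, mulVec_sum, jwVec]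
  congr 1
  refine Finset.sum_congr rfl fun k _ => ?_
  unfold jwUnitary
  rw [kronPow_shiftPhase_mulVec_single, Finset.prod_eq_single k]
  · simp
  · intro m _ hm; simp [hm]
  · simp

theorem dotProduct_jwVec (S T : Fin n → Fin 2) :
    star (jwVec S) ⬝ᵥ jwVec T = if S = T then (n : ℂ) else 0 := by
  rw [jwVec, jwVec, star_sum_single_dotProduct_sum_single]
  simp only [star_jwSign]
  split_ifs with hST
  · subst hST
    simp [single_one_inj, jwSign_mul_self]
  · apply sum_sum_eq_zero_of_antisymm
    intro k l
    by_cases h : Pi.single k 1 + S = Pi.single l 1 + T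
    · rw [if_pos h, if_pos (bits_add_eq_add_swap h), jwSign_swap h hST]
    · rw [if_neg h, if_neg (fun h' => h (bits_add_eq_add_swap h')), neg_zero]

theorem dotProduct_kronPow_jwUnitary_mulVec_Wstate (hn : n ≠ 0) (S T : Fin n → Fin 2) :
    star (kronPow (jwUnitary S) *ᵥ Wstate n) ⬝ᵥ (kronPow (jwUnitary T) *ᵥ Wstate n) =
      if S = T then 1 else 0 := by
  have hnorm : star ((Real.sqrt n : ℂ)⁻¹) * (Real.sqrt n : ℂ)⁻¹ = (n : ℂ)⁻¹ := by
    rw [Complex.star_def, map_inv₀, Complex.conj_ofReal, ← mul_inv, ← Complex.ofReal_mul,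
      Real.mul_self_sqrt (Nat.cast_nonneg n), Complex.ofReal_natCast]
  rw [kronPow_jwUnitary_mulVec_Wstate, kronPow_jwUnitary_mulVec_Wstate, star_smul,
    smul_dotProduct, dotProduct_smul, dotProduct_jwVec, smul_smul, hnorm]
  split_ifs <;> simp [hn]

end JordanWigner

/-- For every `n ≥ 1`, the `n`-qubit `W` state admits a basis under local unitaries: there
are `2^n` strings of local `2×2` unitaries mapping `W_n` to an orthonormal basis. -/
theorem stmt17 (n : ℕ) (hn : 1 ≤ n) :
    ∃ U : Fin (2 ^ n) → Fin n → Matrix (Fin 2) (Fin 2) ℂ,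
      (∀ j k, U j k ∈ Matrix.unitaryGroup (Fin 2) ℂ) ∧
      IsONBasis (fun j => kronPow (U j) *ᵥ Wstate n) := by
  let e : Fin (2 ^ n) ≃ (Fin n → Fin 2) := finFunctionFinEquiv.symm
  refine ⟨fun j => jwUnitary (e j), fun j => jwUnitary_mem_unitaryGroup (e j),
    isONBasis_of_orthonormal _ (fun j j' => ?_) (by simp)⟩
  rw [dotProduct_kronPow_jwUnitary_mulVec_Wstate (by omega)]
  exact if_congr e.injective.eq_iff rfl rfl
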